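/- arXiv:0809.0937 — 2 statements merged into one kernel-verified Lean document; each statement's English description precedes it below -/
import Mathlib

section
/- Let M be an even unimodular Z-lattice of rank 2n admitting a fixed-point-free order-3 isometry \rho, and let M^E be the associated Eisenstein lattice with the scaled hermitian form. Then M^E = \theta (M^E)^* , i.e. the dual lattice of M^E equals (1/\theta) M^E. -/
/-- The primitive cube root of unity `ω = e^{2πi/3} = (-1 + i√3)/2`. -/
noncomputable def omega3 : ℂ := (-1 + Real.sqrt 3 * Complex.I) / 2

/-- The Eisenstein integers `ℤ[ω]`, as a subring of `ℂ`. -/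
noncomputable def Eis : Subring ℂ := Subring.closure {omega3}

lemma sqrt3_sq' : (Real.sqrt 3 : ℂ)^2 = 3 := by
  rw [← Complex.ofReal_pow, Real.sq_sqrt (by norm_num : (0:ℝ) ≤ 3)]; norm_num

lemma omega3_sq : omega3 ^ 2 = -1 - omega3 := by
  unfold omega3
  linear_combination (Complex.I^2/4) * sqrt3_sq' + (3/4 : ℂ) * Complex.I_sq

lemma theta_eq : omega3 - omega3 ^ 2 = Real.sqrt 3 * Complex.I := by
  rw [omega3_sq]; unfold omega3; ring

lemma mem_Eis_iff (z : ℂ) : z ∈ Eis ↔ ∃ m n : ℤ, z = m + n * omega3 := by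
  constructor
  · intro hz
    induction hz using Subring.closure_induction with
    | mem x hx => exact ⟨0, 1, by simp [Set.mem_singleton_iff.mp hx]⟩
    | one => exact ⟨1, 0, by simp⟩
    | zero => exact ⟨0, 0, by simp⟩
    | add a b _ _ ha hb =>
      obtain ⟨m, n, rfl⟩ := ha; obtain ⟨p, q, rfl⟩ := hb
      exact ⟨m + p, n + q, by push_cast; ring⟩
    | neg a _ ha =>
      obtain ⟨m, n, rfl⟩ := ha
      exact ⟨-m, -n, by push_cast; ring⟩
    | mul a b _ _ ha hb =>
      obtain ⟨m, n, rfl⟩ := ha; obtain ⟨p, q, rfl⟩ := hb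
      exact ⟨m * p - n * q, m * q + n * p - n * q, by
        push_cast
        linear_combination ((n : ℂ) * q) * omega3_sq⟩
  · rintro ⟨m, n, rfl⟩
    exact add_mem (intCast_mem Eis m) (mul_mem (intCast_mem Eis n) (Subring.subset_closure rfl))

lemma im_extract (a b : ℚ) (m n : ℤ)
    (h : (1 / 2 : ℂ) * (3 * (a : ℂ) + (omega3 - omega3 ^ 2) * (b : ℂ)) = m + n * omega3) :
    b = n := by
  have him := congrArg Complex.im h
  rw [theta_eq] at him
  simp [omega3, Complex.add_im, Complex.mul_im, Complex.div_im, Complex.add_re,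
    Complex.mul_re] at him
  have hs : Real.sqrt 3 ≠ 0 := by positivity
  have heq : Real.sqrt 3 * (b : ℝ) = Real.sqrt 3 * (n : ℝ) := by linarith
  have := mul_left_cancel₀ hs heq
  exact_mod_cast this

/-- Let `M` (realised as a full-rank ℤ-lattice `Λ` in the rational vector space
`V = M ⊗ ℚ`) be an even unimodular ℤ-lattice with a fixed-point-free order-3
isometry `ρ`, and let `M^E` be the associated Eisenstein lattice with the scaled
hermitian form `h(x,y) = (1/2)(3⟨x,y⟩ + θ⟨x, ρ(y) - ρ²(y)⟩)`, `θ = ω - ω²`.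
Then `M^E = θ·(M^E)^*`, i.e. the dual lattice of `M^E` equals `(1/θ)·M^E`:
a vector `v` pairs integrally (in `ℤ[ω]`) with all of `Λ` iff `v = (1/θ)·w`
for some `w ∈ Λ`, where multiplication by `1/θ = (ω² - ω)/3` acts as
`(ρ² - ρ)/3`. -/
theorem stmt9 {V : Type*} [AddCommGroup V] [Module ℚ V] [FiniteDimensional ℚ V]
    (B : V →ₗ[ℚ] V →ₗ[ℚ] ℚ) (hsymm : ∀ x y, B x y = B y x)
    (Λ : Submodule ℤ V) (hspan : Submodule.span ℚ (Λ : Set V) = ⊤)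
    (hint : ∀ x ∈ Λ, ∀ y ∈ Λ, ∃ n : ℤ, B x y = n)
    (heven : ∀ x ∈ Λ, ∃ n : ℤ, B x x = 2 * n)
    (huni : ∀ v : V, (∀ y ∈ Λ, ∃ n : ℤ, B v y = n) → v ∈ Λ)
    (ρ : V →ₗ[ℚ] V) (hiso : ∀ x y, B (ρ x) (ρ y) = B x y)
    (hρΛ : ∀ x ∈ Λ, ρ x ∈ Λ) (hρΛ' : ∀ x ∈ Λ, ∃ y ∈ Λ, ρ y = x)
    (hfpf : ρ ∘ₗ ρ + ρ + LinearMap.id = 0)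
    (h : V → V → ℂ)
    (hdef : ∀ x y, h x y = (1 / 2) * (3 * (B x y : ℂ) +
      (omega3 - omega3 ^ 2) * (B x (ρ y - ρ (ρ y)) : ℂ))) :
    ∀ v : V, (∀ y ∈ Λ, h v y ∈ Eis) ↔ ∃ w ∈ Λ, v = (3 : ℚ)⁻¹ • (ρ (ρ w) - ρ w) := by
  -- basic consequences of `ρ² + ρ + 1 = 0`
  have hsq : ∀ x : V, ρ (ρ x) = -(ρ x + x) := by
    intro x
    have hx := LinearMap.congr_fun hfpf x
    simp only [LinearMap.add_apply, LinearMap.comp_apply, LinearMap.id_apply,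
      LinearMap.zero_apply] at hx
    exact eq_neg_of_add_eq_zero_left (by rw [← add_assoc]; exact hx)
  have hcube : ∀ x : V, ρ (ρ (ρ x)) = x := by
    intro x
    rw [hsq (ρ x), hsq x]; abel
  have hadj : ∀ x y : V, B (ρ x) y = B x (ρ (ρ y)) := by
    intro x y
    have := hiso x (ρ (ρ y))
    rwa [hcube y] at this
  intro v
  constructor
  · -- forward direction
    intro hv
    set w := ρ v - ρ (ρ v) with hw
    have hkey : ∀ y ∈ Λ, ∃ n : ℤ, B v (ρ y - ρ (ρ y)) = n := by
      intro y hy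
      obtain ⟨m, n, hmn⟩ := (mem_Eis_iff _).mp (hv y hy)
      rw [hdef] at hmn
      exact ⟨n, im_extract _ _ _ _ hmn⟩
    have hwΛ : w ∈ Λ := by
      apply huni
      intro y hy
      obtain ⟨n, hn⟩ := hkey y hy
      refine ⟨-n, ?_⟩
      have hBw : B w y = -B v (ρ y - ρ (ρ y)) := by
        rw [hw]
        rw [map_sub, LinearMap.sub_apply, hadj v y, hadj (ρ v) y, hadj v (ρ (ρ y)),
          hcube (ρ y), map_sub]
        ring
      rw [hBw, hn]; push_cast; ring
    refine ⟨w, hwΛ, ?_⟩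
    have h3 : ρ (ρ w) - ρ w = (3 : ℚ) • v := by
      rw [hw]
      simp only [map_sub, map_neg, map_add, hsq, hcube]
      module
    rw [h3, smul_smul]
    norm_num
  · -- backward direction
    rintro ⟨w, hwΛ, rfl⟩
    intro y hy
    obtain ⟨p, hp⟩ := hint w hwΛ (ρ y) (hρΛ y hy)
    obtain ⟨q, hq⟩ := hint w hwΛ y hy
    have key : ∀ z : V, B ((3 : ℚ)⁻¹ • (ρ (ρ w) - ρ w)) z
        = (3 : ℚ)⁻¹ * (B w (ρ z) - B w (ρ (ρ z))) := by
      intro z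
      rw [map_smul, LinearMap.smul_apply, map_sub, LinearMap.sub_apply,
        hadj (ρ w) z, hadj w (ρ (ρ z)), hcube (ρ z), hadj w z, smul_eq_mul]
    have hz1 : ρ (ρ y - ρ (ρ y)) = -(ρ y + y + y) := by
      rw [map_sub, hsq y, map_neg, map_add, hsq y]
      abel
    have hz2 : ρ (ρ (ρ y - ρ (ρ y))) = y - ρ y := by
      rw [hz1, map_neg, map_add, map_add, hsq y]
      abel
    have e1 : B ((3 : ℚ)⁻¹ • (ρ (ρ w) - ρ w)) y = (3 : ℚ)⁻¹ * (2 * p + q) := by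
      rw [key y, hsq y, map_neg, map_add, hp, hq]
      ring
    have e2 : B ((3 : ℚ)⁻¹ • (ρ (ρ w) - ρ w)) (ρ y - ρ (ρ y)) = -q := by
      rw [key _, hz2, hz1, map_neg, map_add, map_add, map_sub, hp, hq]
      ring
    rw [hdef, e1, e2]
    refine (mem_Eis_iff _).mpr ⟨p, -q, ?_⟩
    push_cast
    linear_combination ((q : ℂ) / 2) * omega3_sq
end

section
/- Let M^E be an Eisenstein lattice of rank n over E = Z[\omega] whose underlying Z-lattice M (of rank 2n) is unimodular, with the standard scaled hermitian form. Then |det M^E| = 3^{n/2} (as a real number), i.e. (det M^E)^2 = 3^n. -/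
/-!
Write `G` for the Gram matrix of `h` in the `E`-basis `(e_i)`. In the `ℤ`-basis `(ω^a e_i)` of
`M`, the Gram matrix of `⟨x, y⟩ = (2/3) Re h(x, y)` is `1/3` times the matrix with entries
`2 Re(w_a w̄_c G_ij) = w_a w̄_c G_ij + w̄_a w_c Ḡ_ij`, where `w = (1, ω)`. That matrix factors as
`(1 ⊗ u) diag(G, Ḡ) (1 ⊗ u)ᴴ` with `u = [[1, 1], [ω, ω̄]]`, and `|det u|² = |ω̄ - ω|² = 3`, so
`det ⟨,⟩ = 3^{-2n} 3^n |det G|²`. A change of `ℤ`-basis has determinant `±1` and does not change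
`det ⟨,⟩ = ±1`; hence `|det G|² = 3^n`, and `det G` is real because `h` is hermitian.
-/

open Matrix
open scoped Kronecker ComplexConjugate

section Gram

variable {L R ι κ : Type*} [AddCommGroup L] [CommRing R] [Fintype ι]
  (B : L →ₗ[ℤ] L →ₗ[ℤ] R)

theorem gram_eq_transpose_mul_gram_mul (b : Module.Basis ι ℤ L) (c : Module.Basis κ ℤ L) :
    (Matrix.of fun i j => B (c i) (c j) : Matrix κ κ R) =
      ((b.toMatrix c).map (Int.cast : ℤ → R))ᵀ * Matrix.of (fun i j => B (b i) (b j)) *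
        (b.toMatrix c).map (Int.cast : ℤ → R) := by
  refine Matrix.ext fun i j => ?_
  rw [mul_apply, of_apply, ← b.sum_toMatrix_smul_self c i, ← b.sum_toMatrix_smul_self c j]
  simp only [map_sum, map_zsmul, LinearMap.sum_apply, LinearMap.smul_apply, zsmul_eq_mul,
    mul_apply, transpose_apply, map_apply, of_apply, Finset.sum_mul, Finset.mul_sum]
  exact Finset.sum_congr rfl fun _ _ => Finset.sum_congr rfl fun _ _ => by ring

theorem det_gram_eq_of_int_bases [Fintype κ] [DecidableEq ι] [DecidableEq κ]
    (b : Module.Basis ι ℤ L) (c : Module.Basis κ ℤ L) :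
    (Matrix.of fun i j => B (c i) (c j)).det = (Matrix.of fun i j => B (b i) (b j)).det := by
  set e := c.indexEquiv b
  set c' := c.reindex e
  have hc : Matrix.of (fun i j => B (c i) (c j)) =
      (Matrix.of fun i j => B (c' i) (c' j)).submatrix e e := by
    ext i j; simp [c']
  have hP : ((b.toMatrix c').det : R) ^ 2 = 1 := by
    let := b.invertibleToMatrix c'
    exact_mod_cast congrArg (Int.cast : ℤ → R) (Int.isUnit_sq (isUnit_det_of_invertible _))
  rw [hc, det_submatrix_equiv_self, gram_eq_transpose_mul_gram_mul B b c', det_mul, det_mul,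
    det_transpose, ← Int.cast_det]
  linear_combination (Matrix.of fun i j => B (b i) (b j)).det * hP

end Gram

theorem det_of_two_mul_re_mul_conj_mul {m : Type*} [Fintype m] [DecidableEq m]
    (G : Matrix m m ℂ) (w : Fin 2 → ℂ) :
    (Matrix.of fun p q : m × Fin 2 => 2 * (w p.2 * conj (w q.2) * G p.1 q.1).re).det =
      Complex.normSq (w 0 * conj (w 1) - conj (w 0) * w 1) ^ Fintype.card m *
        Complex.normSq G.det := by
  set u : Matrix (Fin 2) (Fin 2) ℂ := Matrix.of fun a b => ![w a, conj (w a)] b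
  have hfac : Complex.ofRealHom.mapMatrix
      (Matrix.of fun p q : m × Fin 2 => 2 * (w p.2 * conj (w q.2) * G p.1 q.1).re) =
        ((1 : Matrix m m ℂ) ⊗ₖ u) * blockDiagonal ![G, G.map conj] *
          ((1 : Matrix m m ℂ) ⊗ₖ u)ᴴ := by
    ext ⟨i, a⟩ ⟨j, c⟩
    rw [RingHom.mapMatrix_apply, map_apply, of_apply, Complex.ofRealHom_eq_coe,
      ← Complex.add_conj]
    simp only [map_mul, Complex.conj_conj, mul_apply, kroneckerMap_apply, one_apply, of_apply,
      ite_mul, one_mul, zero_mul, blockDiagonal_apply, mul_ite, mul_zero, Fintype.sum_prod_type,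
      Finset.sum_ite_eq', Finset.mem_univ, ↓reduceIte, Finset.sum_ite_eq, conjTranspose_apply,
      RCLike.star_def, apply_ite (starRingEnd ℂ), map_zero, Finset.sum_ite_irrel,
      Fin.sum_univ_two, cons_val_zero, cons_val_one, map_apply, Finset.sum_const_zero, u]
    ring
  have hu : u.det * conj u.det = Complex.normSq (w 0 * conj (w 1) - conj (w 0) * w 1) := by
    simp [← Complex.mul_conj, det_fin_two, u]
  have hGc : (G.map conj).det = conj G.det := ((starRingEnd ℂ).map_det G).symm
  apply Complex.ofReal_injective
  rw [← Complex.ofRealHom_eq_coe, RingHom.map_det, hfac]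
  simp only [det_mul, det_kronecker, det_one, one_pow, one_mul, det_blockDiagonal,
    Fin.prod_univ_two, cons_val_zero, cons_val_one, hGc, det_conjTranspose, star_pow,
    RCLike.star_def, Complex.ofReal_mul, Complex.ofReal_pow, ← hu, ← Complex.mul_conj]
  ring

theorem Matrix.IsHermitian.det_sq {m : Type*} [Fintype m] [DecidableEq m] {A : Matrix m m ℂ}
    (hA : A.IsHermitian) : A.det ^ 2 = Complex.normSq A.det := by
  have hreal : conj A.det = A.det := by rw [← Complex.star_def, ← det_conjTranspose, hA.eq]
  rw [← Complex.mul_conj, hreal, sq]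

theorem omega3_mem_eis : omega3 ∈ Eis := Subring.subset_closure rfl

theorem omega3_mul_self : omega3 * omega3 = -1 - omega3 := by
  have h3 : (Real.sqrt 3 : ℂ) * Real.sqrt 3 = 3 := by
    rw [← Complex.ofReal_mul, Real.mul_self_sqrt (by norm_num)]; norm_num
  unfold omega3
  linear_combination (Complex.I ^ 2 * h3 + 3 * Complex.I_sq) / 4

theorem normSq_conj_omega3_sub_omega3 : Complex.normSq (conj omega3 - omega3) = 3 := by
  have h : conj omega3 - omega3 = -(Real.sqrt 3 * Complex.I) := by
    simp only [omega3, map_div₀, map_add, map_neg, map_one, map_mul, Complex.conj_ofReal,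
      Complex.conj_I, map_ofNat]
    ring
  rw [h, Complex.normSq_neg, Complex.normSq_mul, Complex.normSq_I, Complex.normSq_ofReal,
    Real.mul_self_sqrt (by norm_num), mul_one]

theorem exists_int_add_int_mul_omega3 {z : ℂ} (hz : z ∈ Eis) :
    ∃ a b : ℤ, (a : ℂ) + b * omega3 = z := by
  induction hz using Subring.closure_induction with
  | mem x hx => exact ⟨0, 1, by simp [Set.mem_singleton_iff.mp hx]⟩
  | zero => exact ⟨0, 0, by simp⟩
  | one => exact ⟨1, 0, by simp⟩
  | add x y _ _ hx hy =>
    obtain ⟨a, b, rfl⟩ := hx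
    obtain ⟨c, d, rfl⟩ := hy
    exact ⟨a + c, b + d, by push_cast; ring⟩
  | neg x _ hx =>
    obtain ⟨a, b, rfl⟩ := hx
    exact ⟨-a, -b, by push_cast; ring⟩
  | mul x y _ _ hx hy =>
    obtain ⟨a, b, rfl⟩ := hx
    obtain ⟨c, d, rfl⟩ := hy
    exact ⟨a * c - b * d, a * d + b * c - b * d, by
      push_cast; linear_combination -(b * d : ℂ) * omega3_mul_self⟩

theorem linearIndependent_one_omega3 :
    LinearIndependent ℤ ![(1 : Eis), ⟨omega3, omega3_mem_eis⟩] := by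
  rw [LinearIndependent.pair_iff]
  intro s t hst
  have hC : (s : ℂ) + t * omega3 = 0 := by simpa using congrArg Subtype.val hst
  have ht : t = 0 := by simpa [omega3] using congrArg Complex.im hC
  subst ht
  exact ⟨by simpa using hC, rfl⟩

theorem span_one_omega3 :
    ⊤ ≤ Submodule.span ℤ (Set.range ![(1 : Eis), ⟨omega3, omega3_mem_eis⟩]) := by
  rintro ⟨z, hz⟩ -
  obtain ⟨a, b, rfl⟩ := exists_int_add_int_mul_omega3 hz
  rw [Matrix.range_cons_cons_empty, Submodule.mem_span_pair]
  exact ⟨a, b, Subtype.ext (by simp)⟩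

noncomputable def eisIntBasis : Module.Basis (Fin 2) ℤ Eis :=
  .mk linearIndependent_one_omega3 span_one_omega3

theorem coe_eisIntBasis_zero : (eisIntBasis 0 : ℂ) = 1 := by simp [eisIntBasis]

theorem coe_eisIntBasis_one : (eisIntBasis 1 : ℂ) = omega3 := by simp [eisIntBasis]

theorem sesq_add_right {L : Type*} [Add L] {h : L → L → ℂ}
    (haddl : ∀ x₁ x₂ y, h (x₁ + x₂) y = h x₁ y + h x₂ y) (hconj : ∀ x y, h x y = conj (h y x))
    (x y₁ y₂ : L) : h x (y₁ + y₂) = h x y₁ + h x y₂ := by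
  rw [hconj, haddl, map_add, ← hconj, ← hconj]

section Sesquilinear

variable {S : Subring ℂ} {L : Type*} [AddCommGroup L] [Module S L] {h : L → L → ℂ}

theorem sesq_smul_right (hsmul : ∀ (c : S) (x y : L), h (c • x) y = (c : ℂ) * h x y)
    (hconj : ∀ x y, h x y = conj (h y x)) (c : S) (x y : L) :
    h x (c • y) = conj (c : ℂ) * h x y := by
  rw [hconj, hsmul, map_mul, ← hconj]

theorem sesq_zsmul_left (hsmul : ∀ (c : S) (x y : L), h (c • x) y = (c : ℂ) * h x y)
    (m : ℤ) (x y : L) : h (m • x) y = m * h x y := by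
  rw [← Int.cast_smul_eq_zsmul S, hsmul]; simp

theorem sesq_zsmul_right (hsmul : ∀ (c : S) (x y : L), h (c • x) y = (c : ℂ) * h x y)
    (hconj : ∀ x y, h x y = conj (h y x)) (m : ℤ) (x y : L) : h x (m • y) = m * h x y := by
  rw [← Int.cast_smul_eq_zsmul S, sesq_smul_right hsmul hconj]; simp

-- Taking real parts in `h = (3⟨x, y⟩ + θ⟨x, ρy - ρ²y⟩) / 2`, with `θ` purely imaginary,
-- recovers the unimodular form as `⟨x, y⟩ = (2/3) Re h(x, y)`.
variable (h) in
noncomputable def underlyingForm (haddl : ∀ x₁ x₂ y, h (x₁ + x₂) y = h x₁ y + h x₂ y)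
    (hsmul : ∀ (c : S) (x y : L), h (c • x) y = (c : ℂ) * h x y)
    (hconj : ∀ x y, h x y = conj (h y x)) : L →ₗ[ℤ] L →ₗ[ℤ] ℝ :=
  LinearMap.mk₂ ℤ (fun x y => (2 / 3 : ℝ) * (h x y).re)
    (fun x₁ x₂ y => by simp only [haddl, Complex.add_re]; ring)
    (fun m x y => by
      simp only [sesq_zsmul_left hsmul, zsmul_eq_mul, Complex.mul_re, Complex.intCast_re,
        Complex.intCast_im, zero_mul, sub_zero]
      ring)
    (fun x y₁ y₂ => by simp only [sesq_add_right haddl hconj, Complex.add_re]; ring)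
    (fun m x y => by
      simp only [sesq_zsmul_right hsmul hconj, zsmul_eq_mul, Complex.mul_re, Complex.intCast_re,
        Complex.intCast_im, zero_mul, sub_zero]
      ring)

end Sesquilinear

theorem det_underlyingForm_gram_smulTower_eisIntBasis {ι L : Type*} [Fintype ι] [DecidableEq ι]
    [AddCommGroup L] [Module Eis L] {h : L → L → ℂ}
    (haddl : ∀ x₁ x₂ y, h (x₁ + x₂) y = h x₁ y + h x₂ y)
    (hsmul : ∀ (c : Eis) (x y : L), h (c • x) y = (c : ℂ) * h x y)
    (hconj : ∀ x y, h x y = conj (h y x)) (bE : Module.Basis ι Eis L) :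
    (Matrix.of fun p q => underlyingForm h haddl hsmul hconj
        ((eisIntBasis.smulTower bE).reindex (Equiv.prodComm _ _) p)
        ((eisIntBasis.smulTower bE).reindex (Equiv.prodComm _ _) q)).det =
      Complex.normSq (Matrix.of fun i j => h (bE i) (bE j)).det / 3 ^ Fintype.card ι := by
  set G : Matrix ι ι ℂ := Matrix.of fun i j => h (bE i) (bE j)
  have hGram : (Matrix.of fun p q => underlyingForm h haddl hsmul hconj
        ((eisIntBasis.smulTower bE).reindex (Equiv.prodComm _ _) p)
        ((eisIntBasis.smulTower bE).reindex (Equiv.prodComm _ _) q)) =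
      (3⁻¹ : ℝ) • Matrix.of fun p q : ι × Fin 2 =>
        2 * ((eisIntBasis p.2 : ℂ) * conj (eisIntBasis q.2 : ℂ) * G p.1 q.1).re := by
    ext ⟨i, a⟩ ⟨j, c⟩
    simp only [of_apply, Module.Basis.reindex_apply, Equiv.prodComm_symm, Equiv.prodComm_apply,
      Prod.swap_prod_mk, Module.Basis.smulTower_apply, underlyingForm, LinearMap.mk₂_apply, hsmul,
      sesq_smul_right hsmul hconj, Matrix.smul_apply, smul_eq_mul, G, mul_assoc]
    ring
  rw [hGram, det_smul, det_of_two_mul_re_mul_conj_mul G (fun a => (eisIntBasis a : ℂ)),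
    coe_eisIntBasis_zero, coe_eisIntBasis_one, map_one, one_mul, one_mul,
    normSq_conj_omega3_sub_omega3, Fintype.card_prod, Fintype.card_fin, pow_mul, inv_pow]
  field_simp

/-- Let `M^E` be an Eisenstein lattice of rank `n` over `E = ℤ[ω]` (hermitian
form `h`), whose underlying ℤ-lattice of rank `2n`, with bilinear form
`⟨x,y⟩ = (2/3)·Re h(x,y)`, is unimodular.  Then `|det M^E| = 3^{n/2}`, i.e. the
square of the determinant of the Gram matrix of `h` in an `E`-basis equals
`3^n`. -/
theorem stmt10 (n : ℕ) {L : Type*} [AddCommGroup L] [Module Eis L]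
    (h : L → L → ℂ)
    (haddl : ∀ x₁ x₂ y, h (x₁ + x₂) y = h x₁ y + h x₂ y)
    (hsmul : ∀ (c : Eis) (x y : L), h (c • x) y = (c : ℂ) * h x y)
    (hconj : ∀ x y, h x y = starRingEnd ℂ (h y x))
    (bE : Module.Basis (Fin n) Eis L)
    (bZ : Module.Basis (Fin (2 * n)) ℤ L)
    (huni : (Matrix.of fun i j => (2 / 3 : ℝ) * (h (bZ i) (bZ j)).re).det = 1 ∨
            (Matrix.of fun i j => (2 / 3 : ℝ) * (h (bZ i) (bZ j)).re).det = -1) :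
    (Matrix.of fun i j => h (bE i) (bE j)).det ^ 2 = (3 : ℂ) ^ n := by
  have hdet : Complex.normSq (Matrix.of fun i j => h (bE i) (bE j)).det =
      3 ^ n * (Matrix.of fun i j => (2 / 3 : ℝ) * (h (bZ i) (bZ j)).re).det := by
    change _ = _ * (Matrix.of fun i j => underlyingForm h haddl hsmul hconj (bZ i) (bZ j)).det
    rw [det_gram_eq_of_int_bases _ ((eisIntBasis.smulTower bE).reindex (Equiv.prodComm _ _)) bZ,
      det_underlyingForm_gram_smulTower_eisIntBasis, Fintype.card_fin]
    field_simp
  have hunit : (Matrix.of fun i j => (2 / 3 : ℝ) * (h (bZ i) (bZ j)).re).det = 1 :=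
    huni.resolve_right fun hneg => by
      have hnonneg := Complex.normSq_nonneg (Matrix.of fun i j => h (bE i) (bE j)).det
      rw [hdet, hneg] at hnonneg
      linarith [pow_pos (three_pos : (0 : ℝ) < 3) n]
  have hG : (Matrix.of fun i j => h (bE i) (bE j)).IsHermitian :=
    Matrix.ext fun i j => (hconj _ _).symm
  rw [hG.det_sq, hdet, hunit]
  simp
end
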